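/- Let u be the map on edges with u(x+1/2, t+1/2) = (−1)^{(x−1)(t−1)} for all (x,t) ∈ ℤ². Then for each (x,t) ∈ ℤ² with t ≥ 1 such that either (x,t) ≡ (2,1) (mod 4) or (x,t) ≡ (0,3) (mod 4), the following hold: √2·a₁(x+1,t,u) = a₁(x,t−1,u) = √2·a₁(x−1,t,u) = a₁(x,t+1,u) = √2·a₂(x+1,t,u) = √2·a₂(x−1,t,u) − 2·a₂(x,t+1,u), and a₂(x,t−1,u) = 0. -/

import Mathlib

open scoped BigOperators

/-- The final x-coordinate of a checker path from `(0,0)` encoded by its sequence of moves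
(`true` = move `(1,1)`, `false` = move `(-1,1)`). -/
def moveEndpoint {n : ℕ} (d : Fin n → Bool) : ℤ :=
  ∑ k, (if d k then (1 : ℤ) else -1)

/-- The number of turns of a checker path encoded by its sequence of moves. -/
def nturns {n : ℕ} (d : Fin n → Bool) : ℕ :=
  ((List.ofFn d).zip (List.ofFn d).tail).countP fun p => p.1 != p.2

/-- Checker paths from `(0,0)` to `(x,t)` whose first step is to `(1,1)`,
encoded by their sequences of moves. -/
def cpaths (x t : ℤ) : Finset (Fin t.toNat → Bool) :=
  Finset.univ.filter fun d => moveEndpoint d = x ∧ (List.ofFn d).headI = true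

/-- The x-coordinate of the `k`-th point of the path encoded by moves `d`. -/
def cpos {n : ℕ} (d : Fin n → Bool) (k : Fin n) : ℤ :=
  ∑ j ∈ Finset.univ.filter (fun j : Fin n => (j : ℕ) < (k : ℕ)), (if d j then (1 : ℤ) else -1)

/-- Product of the values of the field `u` over the edges of the path encoded by `d`.
Here `u x t` denotes the value of the field on the edge with midpoint `(x + 1/2, t + 1/2)`. -/
def fieldWeight (u : ℤ → ℤ → ℝ) {n : ℕ} (d : Fin n → Bool) : ℝ :=
  ∏ k : Fin n, (if d k then u (cpos d k) (k : ℕ) else u (cpos d k - 1) (k : ℕ))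

/-- Feynman checkers amplitude `a(x,t,u)` in an external field `u`, where `u x t` is
the value of the field on the edge with midpoint `(x + 1/2, t + 1/2)`. -/
noncomputable def af (u : ℤ → ℤ → ℝ) (x t : ℤ) : ℂ :=
  (Real.sqrt 2 : ℂ) ^ (1 - t) * Complex.I *
    ∑ d ∈ cpaths x t, (-Complex.I) ^ nturns d * (fieldWeight u d : ℂ)

/-!
Splitting the paths by their last move writes `a₁` and `a₂`, up to the factor `√2^(1-t)`, as
real sums `amp₁` and `amp₂` obeying the Dirac equation in the field: each is the value of `u` on
the last edge times `amp₂ ± amp₁` one step earlier. For the homogeneous field, `u x t = 1` for odd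
`t`, while for even `t` it is `-1` exactly when `x` is even. Two steps of the equation then
preserve, along the class `x + 2k ≡ 2 (mod 4)`, the invariant
`amp₂ x (2k) = 0`, `amp₂ (x+2) (2k) + amp₁ (x+2) (2k) = amp₁ x (2k)`, and one further step from
time `2k` yields all the diamond relations.
-/

namespace FeynmanCheckers

open Complex Finset

def moveStep (b : Bool) : ℤ := if b then 1 else -1

def lastMove {n : ℕ} (d : Fin n → Bool) : Bool := (List.ofFn d).getLastD false

/-- `cpaths x t = startRightPaths x t.toNat`, indexed by the number of moves. -/
def startRightPaths (x : ℤ) (n : ℕ) : Finset (Fin n → Bool) :=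
  univ.filter fun d => moveEndpoint d = x ∧ (List.ofFn d).headI = true

noncomputable def pathAmp (u : ℤ → ℤ → ℝ) {n : ℕ} (d : Fin n → Bool) : ℂ :=
  (-I) ^ nturns d * (fieldWeight u d : ℂ)

noncomputable def partialAmp (u : ℤ → ℤ → ℝ) (b : Bool) (x : ℤ) (n : ℕ) : ℂ :=
  ∑ d ∈ (startRightPaths x n).filter (lastMove · = b), pathAmp u d

lemma lastMove_eq_last {n : ℕ} (d : Fin (n + 1) → Bool) : lastMove d = d (Fin.last n) := by
  rw [lastMove, List.ofFn_succ', List.concat_eq_append, List.getLastD_concat]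

@[simp]
lemma lastMove_snoc {n : ℕ} (e : Fin n → Bool) (b : Bool) :
    lastMove (Fin.snoc e b : Fin (n + 1) → Bool) = b := by
  rw [lastMove_eq_last, Fin.snoc_last]

lemma moveEndpoint_snoc {n : ℕ} (e : Fin n → Bool) (b : Bool) :
    moveEndpoint (Fin.snoc e b : Fin (n + 1) → Bool) = moveEndpoint e + moveStep b := by
  simp [moveEndpoint, moveStep, Fin.sum_univ_castSucc]

lemma cpos_snoc_castSucc {n : ℕ} (e : Fin n → Bool) (b : Bool) (k : Fin n) :
    cpos (Fin.snoc e b : Fin (n + 1) → Bool) k.castSucc = cpos e k := by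
  simp only [cpos, sum_filter, Fin.sum_univ_castSucc, Fin.val_castSucc, Fin.snoc_castSucc,
    Fin.val_last, not_lt_of_gt k.isLt, if_false, add_zero]

lemma cpos_snoc_last {n : ℕ} (e : Fin n → Bool) (b : Bool) :
    cpos (Fin.snoc e b : Fin (n + 1) → Bool) (Fin.last n) = moveEndpoint e := by
  simp [cpos, moveEndpoint, sum_filter, Fin.sum_univ_castSucc, Fin.snoc_castSucc]

lemma fieldWeight_snoc (u : ℤ → ℤ → ℝ) {n : ℕ} (e : Fin n → Bool) (b : Bool) :
    fieldWeight u (Fin.snoc e b : Fin (n + 1) → Bool) =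
      fieldWeight u e * u (moveEndpoint e - if b then 0 else 1) n := by
  rw [fieldWeight, Fin.prod_univ_castSucc, fieldWeight]
  congr 1
  · simp only [cpos_snoc_castSucc, Fin.snoc_castSucc, Fin.val_castSucc]
  · cases b <;> simp [cpos_snoc_last]

def listTurns (l : List Bool) : ℕ := (l.zip l.tail).countP fun p => p.1 != p.2

lemma listTurns_cons_cons (a c : Bool) (l : List Bool) :
    listTurns (a :: c :: l) = listTurns (c :: l) + if a != c then 1 else 0 := by
  simp [listTurns, List.countP_cons]

lemma listTurns_concat (a b : Bool) (l : List Bool) :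
    listTurns ((a :: l) ++ [b]) =
      listTurns (a :: l) + if (a :: l).getLastD false != b then 1 else 0 := by
  induction l generalizing a with
  | nil => cases a <;> cases b <;> rfl
  | cons c l ih =>
    rw [List.cons_append, List.cons_append, listTurns_cons_cons, ← List.cons_append, ih,
      listTurns_cons_cons]
    simp only [List.getLastD_cons]
    ring

lemma ofFn_snoc {n : ℕ} (e : Fin n → Bool) (b : Bool) :
    List.ofFn (Fin.snoc e b : Fin (n + 1) → Bool) = List.ofFn e ++ [b] := by
  rw [List.ofFn_succ', Fin.snoc_last, List.concat_eq_append]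
  simp only [Fin.snoc_castSucc]

lemma nturns_snoc {n : ℕ} (e : Fin (n + 1) → Bool) (b : Bool) :
    nturns (Fin.snoc e b : Fin (n + 2) → Bool) =
      nturns e + if lastMove e != b then 1 else 0 := by
  have h := listTurns_concat (e 0) b (List.ofFn fun i : Fin n => e i.succ)
  rw [← List.ofFn_succ] at h
  change listTurns (List.ofFn (Fin.snoc e b)) = listTurns (List.ofFn e) + _
  rw [ofFn_snoc, h, lastMove]

lemma snoc_mem_startRightPaths {n : ℕ} (e : Fin (n + 1) → Bool) (b : Bool) (x : ℤ) :
    (Fin.snoc e b : Fin (n + 2) → Bool) ∈ startRightPaths x (n + 2) ↔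
      e ∈ startRightPaths (x - moveStep b) (n + 1) := by
  simp [startRightPaths, moveEndpoint_snoc, eq_sub_iff_add_eq]

lemma pathAmp_snoc (u : ℤ → ℤ → ℝ) {n : ℕ} (e : Fin (n + 1) → Bool) (b : Bool) :
    pathAmp u (Fin.snoc e b : Fin (n + 2) → Bool) =
      u (moveEndpoint e - if b then 0 else 1) (n + 1) *
        ((if lastMove e = b then 1 else -I) * pathAmp u e) := by
  rw [pathAmp, pathAmp, nturns_snoc, fieldWeight_snoc]
  split_ifs <;> simp_all <;> ring

lemma partialAmp_eq_sum_snoc (u : ℤ → ℤ → ℝ) (b : Bool) (x : ℤ) (n : ℕ) :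
    partialAmp u b x (n + 2) =
      ∑ e ∈ startRightPaths (x - moveStep b) (n + 1), pathAmp u (Fin.snoc e b) := by
  have snoc_init {d : Fin (n + 2) → Bool} (hd : lastMove d = b) : Fin.snoc (Fin.init d) b = d := by
    rw [← hd, lastMove_eq_last, Fin.snoc_init_self]
  refine sum_nbij' Fin.init (Fin.snoc · b) (fun d hd => ?_) (fun e he => ?_)
    (fun d hd => snoc_init (mem_filter.1 hd).2) (fun e _ => Fin.init_snoc (α := fun _ => Bool) b e)
    (fun d hd => by rw [snoc_init (mem_filter.1 hd).2])
  · rw [mem_filter] at hd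
    rw [← snoc_mem_startRightPaths, snoc_init hd.2]
    exact hd.1
  · rw [← snoc_mem_startRightPaths] at he
    exact mem_filter.2 ⟨he, lastMove_snoc e b⟩

/-- A path of time `n + 2` ending with the move `b` extends a path of time `n + 1`, and turns
there iff that path ends with `!b`. -/
theorem partialAmp_succ_succ (u : ℤ → ℤ → ℝ) (b : Bool) (x : ℤ) (n : ℕ) :
    partialAmp u b x (n + 2) = u (x - if b then 1 else 0) (n + 1) *
      (partialAmp u b (x - moveStep b) (n + 1) +
        -I * partialAmp u (!b) (x - moveStep b) (n + 1)) := by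
  have field_eq {e : Fin (n + 1) → Bool} (he : e ∈ startRightPaths (x - moveStep b) (n + 1)) :
      moveEndpoint e - (if b then 0 else 1) = x - if b then 1 else 0 := by
    rw [(mem_filter.1 he).2.1]
    cases b <;> simp [moveStep]
  rw [partialAmp_eq_sum_snoc, sum_congr rfl fun e he => by rw [pathAmp_snoc, field_eq he],
    ← mul_sum]
  simp only [ite_mul, one_mul, sum_ite, ← mul_sum, partialAmp, ← Bool.eq_not]

lemma startRightPaths_zero (x : ℤ) : startRightPaths x 0 = ∅ := by
  ext d
  simp [startRightPaths, List.ofFn_zero]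

lemma startRightPaths_one (x : ℤ) :
    startRightPaths x 1 = if x = 1 then {fun _ => true} else ∅ := by
  ext d
  obtain ⟨c, rfl⟩ : ∃ c, d = fun _ => c :=
    ⟨d 0, funext fun i => congrArg d (Subsingleton.elim i 0)⟩
  split_ifs with hx
  · cases c <;> simp [startRightPaths, moveEndpoint, hx, funext_iff]
  · cases c <;> simp [startRightPaths, moveEndpoint, Ne.symm hx]

lemma partialAmp_zero (u : ℤ → ℤ → ℝ) (b : Bool) (x : ℤ) : partialAmp u b x 0 = 0 := by
  simp [partialAmp, startRightPaths_zero]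

lemma partialAmp_one (u : ℤ → ℤ → ℝ) (b : Bool) (x : ℤ) :
    partialAmp u b x 1 = if b ∧ x = 1 then (u 0 0 : ℂ) else 0 := by
  rw [partialAmp, startRightPaths_one]
  split_ifs <;> cases b <;>
    simp_all [pathAmp, nturns, fieldWeight, cpos, lastMove_eq_last, filter_singleton]

/-- Paths ending with a move `(1,1)` make an even number of turns, the others an odd one. -/
lemma partialAmp_true_im_and_false_re (u : ℤ → ℤ → ℝ) (n : ℕ) (x : ℤ) :
    (partialAmp u true x n).im = 0 ∧ (partialAmp u false x n).re = 0 := by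
  induction n using Nat.twoStepInduction generalizing x with
  | zero => simp [partialAmp_zero]
  | one => simp [partialAmp_one, apply_ite]
  | more n _ ih =>
    simp [partialAmp_succ_succ, mul_re, mul_im, (ih _).1, (ih _).2]

lemma af_eq_partialAmp (u : ℤ → ℤ → ℝ) (x t : ℤ) :
    af u x t = (Real.sqrt 2 : ℂ) ^ (1 - t) * I *
      (partialAmp u true x t.toNat + partialAmp u false x t.toNat) := by
  rw [af, ← sum_filter_add_sum_filter_not _ (lastMove · = true)]
  simp only [Bool.not_eq_true]
  rfl

noncomputable def amp₁ (u : ℤ → ℤ → ℝ) (x : ℤ) (n : ℕ) : ℝ := -(partialAmp u false x n).im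

noncomputable def amp₂ (u : ℤ → ℤ → ℝ) (x : ℤ) (n : ℕ) : ℝ := (partialAmp u true x n).re

lemma re_af (u : ℤ → ℤ → ℝ) (x t : ℤ) :
    (af u x t).re = Real.sqrt 2 ^ (1 - t) * amp₁ u x t.toNat := by
  rw [af_eq_partialAmp, ← ofReal_zpow, mul_assoc, re_ofReal_mul]
  simp [amp₁, (partialAmp_true_im_and_false_re u _ x).1]

lemma im_af (u : ℤ → ℤ → ℝ) (x t : ℤ) :
    (af u x t).im = Real.sqrt 2 ^ (1 - t) * amp₂ u x t.toNat := by
  rw [af_eq_partialAmp, ← ofReal_zpow, mul_assoc, im_ofReal_mul]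
  simp [amp₂, (partialAmp_true_im_and_false_re u _ x).2]

lemma amp₁_succ_succ (u : ℤ → ℤ → ℝ) (x : ℤ) (n : ℕ) :
    amp₁ u x (n + 2) = u x (n + 1) * (amp₂ u (x + 1) (n + 1) + amp₁ u (x + 1) (n + 1)) := by
  simp [amp₁, amp₂, partialAmp_succ_succ, moveStep, mul_im]
  ring

lemma amp₂_succ_succ (u : ℤ → ℤ → ℝ) (x : ℤ) (n : ℕ) :
    amp₂ u x (n + 2) = u (x - 1) (n + 1) * (amp₂ u (x - 1) (n + 1) - amp₁ u (x - 1) (n + 1)) := by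
  simp [amp₁, amp₂, partialAmp_succ_succ, moveStep, mul_re]

lemma amp₁_zero (u : ℤ → ℤ → ℝ) (x : ℤ) : amp₁ u x 0 = 0 := by simp [amp₁, partialAmp_zero]
lemma amp₂_zero (u : ℤ → ℤ → ℝ) (x : ℤ) : amp₂ u x 0 = 0 := by simp [amp₂, partialAmp_zero]
lemma amp₁_one (u : ℤ → ℤ → ℝ) (x : ℤ) : amp₁ u x 1 = 0 := by simp [amp₁, partialAmp_one]
lemma amp₂_one (u : ℤ → ℤ → ℝ) (x : ℤ) : amp₂ u x 1 = if x = 1 then u 0 0 else 0 := by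
  rw [amp₂, partialAmp_one]
  split_ifs <;> simp_all

noncomputable def magneticField (x t : ℤ) : ℝ := (-1) ^ ((x - 1) * (t - 1))

lemma magneticField_of_odd_left {x : ℤ} (hx : Odd x) (t : ℤ) : magneticField x t = 1 :=
  Even.neg_one_zpow (Int.even_mul.2 (Or.inl (hx.sub_odd odd_one)))

lemma magneticField_of_odd_right (x : ℤ) {t : ℤ} (ht : Odd t) : magneticField x t = 1 :=
  Even.neg_one_zpow (Int.even_mul.2 (Or.inr (ht.sub_odd odd_one)))

lemma magneticField_of_even {x t : ℤ} (hx : Even x) (ht : Even t) : magneticField x t = -1 :=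
  Odd.neg_one_zpow (Int.odd_mul.2 ⟨hx.sub_odd odd_one, ht.sub_odd odd_one⟩)

local notation "A₁" => amp₁ magneticField
local notation "A₂" => amp₂ magneticField

lemma amp_step_from_odd (x : ℤ) {n : ℕ} (hn : Odd n) :
    A₂ x (n + 1) = A₂ (x - 1) n - A₁ (x - 1) n ∧ A₁ x (n + 1) = A₂ (x + 1) n + A₁ (x + 1) n := by
  obtain ⟨m, rfl⟩ := hn
  have hodd : Odd ((2 * m : ℕ) + 1 : ℤ) := ⟨m, by push_cast; ring⟩
  rw [amp₂_succ_succ, amp₁_succ_succ, magneticField_of_odd_right _ hodd,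
    magneticField_of_odd_right _ hodd, one_mul, one_mul]
  exact ⟨rfl, rfl⟩

lemma amp_step_from_even {x : ℤ} (hx : Even x) {n : ℕ} (hn : Even n) (hn₀ : n ≠ 0) :
    A₂ (x + 1) (n + 1) = A₁ x n - A₂ x n ∧ A₁ (x - 1) (n + 1) = A₂ x n + A₁ x n := by
  obtain ⟨m, rfl⟩ : ∃ m, n = 2 * m + 2 := ⟨n / 2 - 1, by grind⟩
  have heven : Even ((2 * m + 1 : ℕ) + 1 : ℤ) := ⟨m + 1, by push_cast; ring⟩
  constructor
  · rw [amp₂_succ_succ _ _ (2 * m + 1), add_sub_cancel_right, magneticField_of_even hx heven]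
    ring
  · rw [amp₁_succ_succ _ _ (2 * m + 1), sub_add_cancel,
      magneticField_of_odd_left (hx.sub_odd odd_one)]
    ring

lemma amp_two_steps {x : ℤ} (hx : Even x) {n : ℕ} (hn : Even n) (hn₀ : n ≠ 0) :
    A₂ x (n + 2) = A₁ (x - 2) n - A₂ (x - 2) n - (A₂ x n + A₁ x n) ∧
      A₁ x (n + 2) = A₁ x n - A₂ x n + (A₂ (x + 2) n + A₁ (x + 2) n) := by
  obtain ⟨h₂, -⟩ := amp_step_from_even (hx.sub even_two) hn hn₀
  obtain ⟨h₂', h₁⟩ := amp_step_from_even hx hn hn₀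
  obtain ⟨-, h₁'⟩ := amp_step_from_even (hx.add even_two) hn hn₀
  obtain ⟨g₂, g₁⟩ := amp_step_from_odd x hn.add_one
  rw [show x - 2 + 1 = x - 1 by ring] at h₂
  rw [show x + 2 - 1 = x + 1 by ring] at h₁'
  exact ⟨by rw [g₂, h₂, h₁], by rw [g₁, h₂', h₁']⟩

theorem amp_invariant : ∀ (k : ℕ) (x : ℤ), (x + 2 * k) % 4 = 2 →
    A₂ x (2 * k) = 0 ∧ A₂ (x + 2) (2 * k) + A₁ (x + 2) (2 * k) = A₁ x (2 * k)
  | 0, x, _ => by simp [amp₁_zero, amp₂_zero]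
  | 1, x, hx => by
    obtain ⟨h₂, h₁⟩ := amp_step_from_odd x odd_one
    obtain ⟨h₂', h₁'⟩ := amp_step_from_odd (x + 2) odd_one
    have hx₁ : x - 1 ≠ 1 := by omega
    have hx₃ : x + 2 + 1 ≠ 1 := by omega
    simp [h₂, h₁, h₂', h₁', amp₁_one, amp₂_one, hx₁, hx₃, show x + 2 - 1 = x + 1 by ring]
  | k + 2, x, hx => by
    obtain ⟨hl₂, hl⟩ := amp_invariant (k + 1) (x - 2) (by omega)
    obtain ⟨hr₂, hr⟩ := amp_invariant (k + 1) (x + 2) (by omega)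
    have hn : Even (2 * (k + 1)) := even_two_mul _
    obtain ⟨h₂, h₁⟩ := amp_two_steps (x := x) ⟨x / 2, by omega⟩ hn (by omega)
    obtain ⟨h₂', h₁'⟩ := amp_two_steps (x := x + 2) ⟨x / 2 + 1, by omega⟩ hn (by omega)
    rw [sub_add_cancel] at hl
    rw [show x + 2 + 2 = x + 4 by ring] at hr h₁'
    rw [show x + 2 - 2 = x by ring] at h₂'
    rw [show 2 * (k + 2) = 2 * (k + 1) + 2 by ring]
    constructor <;> linarith

theorem amp_diamond (k : ℕ) (x : ℤ) (hx : (x + 2 * k) % 4 = 2) :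
    A₂ x (2 * k) = 0 ∧ A₁ (x - 1) (2 * k + 1) = A₁ x (2 * k) ∧
      A₁ (x + 1) (2 * k + 1) = A₁ x (2 * k) ∧ A₂ (x + 1) (2 * k + 1) = A₁ x (2 * k) ∧
      A₁ x (2 * k + 2) = 2 * A₁ x (2 * k) ∧
      A₂ x (2 * k + 2) = A₂ (x - 1) (2 * k + 1) - A₂ (x + 1) (2 * k + 1) := by
  obtain ⟨h₀, hinv⟩ := amp_invariant k x hx
  have hodd : A₁ (x - 1) (2 * k + 1) = A₁ x (2 * k) ∧ A₁ (x + 1) (2 * k + 1) = A₁ x (2 * k) ∧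
      A₂ (x + 1) (2 * k + 1) = A₁ x (2 * k) := by
    rcases Nat.eq_zero_or_pos k with rfl | hk
    · have hx₁ : x + 1 ≠ 1 := by omega
      simp [amp₁_zero, amp₁_one, amp₂_one, hx₁]
    · have hx' : Even x := ⟨x / 2, by omega⟩
      obtain ⟨h₂, h₁⟩ := amp_step_from_even hx' (even_two_mul k) (by omega)
      obtain ⟨-, h₁'⟩ := amp_step_from_even (hx'.add even_two) (even_two_mul k) (by omega)
      rw [show x + 2 - 1 = x + 1 by ring] at h₁'
      exact ⟨by rw [h₁, h₀, zero_add], by rw [h₁', hinv], by rw [h₂, h₀, sub_zero]⟩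
  obtain ⟨g₂, g₁⟩ := amp_step_from_odd x (odd_two_mul_add_one k)
  refine ⟨h₀, hodd.1, hodd.2.1, hodd.2.2, ?_, ?_⟩ <;>
    rw [show 2 * k + 2 = 2 * k + 1 + 1 from rfl] <;> linarith

end FeynmanCheckers

open FeynmanCheckers

/-- Linear relations in diamonds for the homogeneous magnetic field
`u(x+1/2, t+1/2) = (-1)^((x-1)(t-1))`. -/
theorem diamond_relations (u : ℤ → ℤ → ℝ)
    (hu : ∀ x t : ℤ, u x t = (-1 : ℝ) ^ ((x - 1) * (t - 1)))
    (x t : ℤ) (ht : 1 ≤ t)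
    (hxt : (x % 4 = 2 ∧ t % 4 = 1) ∨ (x % 4 = 0 ∧ t % 4 = 3)) :
    (Real.sqrt 2 * (af u (x + 1) t).re = (af u x (t - 1)).re ∧
     (af u x (t - 1)).re = Real.sqrt 2 * (af u (x - 1) t).re ∧
     Real.sqrt 2 * (af u (x - 1) t).re = (af u x (t + 1)).re ∧
     (af u x (t + 1)).re = Real.sqrt 2 * (af u (x + 1) t).im ∧
     Real.sqrt 2 * (af u (x + 1) t).im =
       Real.sqrt 2 * (af u (x - 1) t).im - 2 * (af u x (t + 1)).im) ∧
    (af u x (t - 1)).im = 0 := by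
  obtain rfl : u = magneticField := funext₂ hu
  obtain ⟨k, hk⟩ : ∃ k : ℕ, t.toNat = 2 * k + 1 := ⟨t.toNat / 2, by omega⟩
  obtain ⟨h₀, h₁, h₂, h₃, h₄, h₅⟩ := amp_diamond k x (by omega)
  have hs : Real.sqrt 2 * Real.sqrt 2 = 2 := Real.mul_self_sqrt zero_le_two
  have hs₀ : Real.sqrt 2 ≠ 0 := by positivity
  have e₁ : Real.sqrt 2 ^ (1 - t) = Real.sqrt 2 * Real.sqrt 2 ^ (1 - (t + 1)) := by
    rw [← zpow_one_add₀ hs₀]; ring_nf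
  have e₂ : Real.sqrt 2 ^ (1 - (t - 1)) = Real.sqrt 2 * Real.sqrt 2 ^ (1 - t) := by
    rw [← zpow_one_add₀ hs₀]; ring_nf
  simp only [re_af, im_af, e₂, e₁, hk, show (t - 1).toNat = 2 * k by omega,
    show (t + 1).toNat = 2 * k + 2 by omega, h₀, h₁, h₂, h₃, h₄, h₅]
  generalize Real.sqrt 2 ^ (1 - (t + 1)) = a
  generalize amp₁ magneticField x (2 * k) = c
  generalize amp₂ magneticField (x - 1) (2 * k + 1) = g
  refine ⟨⟨by ring, by ring, ?_, ?_, ?_⟩, by ring⟩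
  · linear_combination (a * c) * hs
  · linear_combination -(a * c) * hs
  · linear_combination (a * c - a * g) * hs
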